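/- arXiv:2306.06925 — 6 statements merged into one kernel-verified Lean document; each statement's English description precedes it below -/
import Mathlib

section
/- The binary Pascal matrix P and the anti-diagonal matrix J (with ones on the anti-diagonal) satisfy the identity P J P = J P J over GF(2). -/
/-!
Read a vector as a polynomial of degree `< m`: `P` is the substitution `p(X) ↦ p(X + 1)` and `J`
is the reversal `X ^ j ↦ X ^ (m - 1 - j)`. Column `k` of `P J P` is then
`∑ j, C(k, j) (X + 1) ^ (m - 1 - j) = (X + 1) ^ (m - 1 - k) (X + 2) ^ k`, which in characteristic 2
is `X ^ k (X + 1) ^ (m - 1 - k)`. Its coefficients `C(m - 1 - k, i - k)` are, by the symmetry of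
binomial coefficients, the entries `C(m - 1 - k, m - 1 - i)` of `J P J`.
-/

open Matrix

/-- The binary Pascal matrix over GF(2): entries C(j-1, i-1) mod 2 (1-indexed),
i.e. C(j, i) with 0-indexed `Fin`. -/
def pascal (m : ℕ) : Matrix (Fin m) (Fin m) (ZMod 2) :=
  fun i j => (Nat.choose j.val i.val : ZMod 2)

/-- The anti-diagonal matrix over GF(2), with ones on the anti-diagonal. -/
def antiDiag (m : ℕ) : Matrix (Fin m) (Fin m) (ZMod 2) :=
  fun i j => if i.val + j.val + 1 = m then 1 else 0

open Finset Polynomial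

theorem X_pow_mul_X_add_one_pow_eq_sum {R : Type*} [CommRing R] [CharP R 2] (k n : ℕ) :
    (X : R[X]) ^ k * (X + 1) ^ n =
      ∑ j ∈ range (k + 1), (k.choose j : R[X]) * (X + 1) ^ (n + (k - j)) := by
  have hX : (X : R[X]) = 1 + (X + 1) := by
    linear_combination -(CharTwo.two_eq_zero : (2 : R[X]) = 0)
  nth_rw 1 [hX]
  rw [add_pow, sum_mul]
  refine sum_congr rfl fun j _ => ?_
  rw [one_pow, one_mul, mul_comm _ (k.choose j : R[X]), mul_assoc, ← pow_add, add_comm (k - j) n]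

theorem coeff_X_pow_mul_X_add_one_pow {R : Type*} [Semiring R] {k n i : ℕ} (hi : i ≤ n + k) :
    ((X : R[X]) ^ k * (X + 1) ^ n).coeff i = (n.choose (n + k - i) : R) := by
  rw [coeff_X_pow_mul', coeff_X_add_one_pow]
  split_ifs with hki
  · rw [← Nat.choose_symm (by omega : i - k ≤ n)]
    congr 2
    omega
  · rw [Nat.choose_eq_zero_of_lt (by omega : n < n + k - i), Nat.cast_zero]

theorem sum_choose_rev_mul_choose {R : Type*} [CommRing R] [CharP R 2] {m : ℕ} (i k : Fin m) :
    ∑ j : Fin m, ((j.rev : ℕ).choose i : R) * ((k : ℕ).choose j : R) =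
      ((k.rev : ℕ).choose i.rev : R) := by
  have hk := k.is_lt
  have hi := i.is_lt
  have key := congrArg (coeff · (i : ℕ)) (X_pow_mul_X_add_one_pow_eq_sum (R := R) k k.rev)
  simp only [finsetSum_coeff, coeff_natCast_mul, coeff_X_add_one_pow] at key
  simp only [Fin.val_rev] at key ⊢
  rw [coeff_X_pow_mul_X_add_one_pow (by omega), (by omega : m - (k + 1) + k - i = m - (i + 1))]
    at key
  rw [key, Fin.sum_univ_eq_sum_range
    (fun j => ((m - (j + 1)).choose i : R) * ((k : ℕ).choose j : R))]
  refine (sum_subset (range_subset_range.2 hk) fun j _ hj => ?_).symm.trans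
    (sum_congr rfl fun j hj => ?_)
  · rw [Nat.choose_eq_zero_of_lt (by simpa using hj : (k : ℕ) < j), Nat.cast_zero, mul_zero]
  · rw [mul_comm, (by simp at hj; omega : m - (j + 1) = m - (k + 1) + (k - j))]

theorem antiDiag_eq_submatrix_one (m : ℕ) :
    antiDiag m = (1 : Matrix (Fin m) (Fin m) (ZMod 2)).submatrix id Fin.rev := by
  ext i j
  simp only [antiDiag, submatrix_apply, id, one_apply, Fin.ext_iff, Fin.val_rev]
  congr 1
  apply propext
  omega

theorem mul_antiDiag {l : Type*} {m : ℕ} (A : Matrix l (Fin m) (ZMod 2)) :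
    A * antiDiag m = A.submatrix id Fin.rev := by
  rw [antiDiag_eq_submatrix_one]
  exact mul_submatrix_one (Equiv.refl _) Fin.rev A

theorem antiDiag_mul {n : Type*} {m : ℕ} (A : Matrix (Fin m) n (ZMod 2)) :
    antiDiag m * A = A.submatrix Fin.rev id := by
  rw [antiDiag_eq_submatrix_one]
  exact one_submatrix_mul id Fin.revPerm A

/-- `P J P = J P J` over GF(2). -/
theorem pascal_antiDiag_pascal (m : ℕ) :
    pascal m * antiDiag m * pascal m = antiDiag m * pascal m * antiDiag m := by
  ext i k
  rw [mul_antiDiag, antiDiag_mul, mul_antiDiag, submatrix_submatrix, mul_apply]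
  exact sum_choose_rev_mul_choose i k
end

section
/- Let (C_x, C_y) be a progressive pair of m×m matrices over GF(2), let U be upper unitriangular, and let L_x, L_y be lower unitriangular. Then (L_x C_x U, L_y C_y U) is also a progressive pair. -/
/-!
Taking leading `k × k` blocks commutes with multiplying by a lower triangular matrix on the left
and by an upper triangular one on the right. Splitting the rows of a hybrid matrix into the first
`k - r` and the last `r`, the hybrid matrix of `(Lx * A, Ly * B)` is `diag(Lx, Ly)` times the
hybrid matrix of `(A, B)`, while `U` multiplies all rows at once. So every hybrid determinant is
multiplied by `det Lx * det Ly * det U = 1`.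
-/

open Matrix

/-- Lower unitriangular matrix over GF(2). -/
def IsLowerUni {m : ℕ} (L : Matrix (Fin m) (Fin m) (ZMod 2)) : Prop :=
  (∀ i, L i i = 1) ∧ ∀ i j : Fin m, i < j → L i j = 0

/-- Upper unitriangular matrix over GF(2). -/
def IsUpperUni {m : ℕ} (U : Matrix (Fin m) (Fin m) (ZMod 2)) : Prop :=
  (∀ i, U i i = 1) ∧ ∀ i j : Fin m, j < i → U i j = 0
/-- The hybrid matrix whose first `m - r` rows are the first `m - r` rows of `Cx`
and whose last `r` rows are the first `r` rows of `Cy`. -/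
def hybrid (m r : ℕ) (Cx Cy : Matrix (Fin m) (Fin m) (ZMod 2)) :
    Matrix (Fin m) (Fin m) (ZMod 2) :=
  fun i j =>
    if i.val < m - r then Cx i j
    else Cy ⟨i.val - (m - r), Nat.lt_of_le_of_lt (Nat.sub_le _ _) i.isLt⟩ j

/-- A dyadic pair: all hybrid matrices are invertible. -/
def DyadicPair {m : ℕ} (Cx Cy : Matrix (Fin m) (Fin m) (ZMod 2)) : Prop :=
  ∀ r ≤ m, (hybrid m r Cx Cy).det ≠ 0
/-- A progressive pair: for all `r ≤ k ≤ m`, the hybrid matrix built from the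
leading `k × k` blocks of `Cx` and `Cy` is invertible. -/
def ProgressivePair {m : ℕ} (Cx Cy : Matrix (Fin m) (Fin m) (ZMod 2)) : Prop :=
  ∀ k, ∀ hk : k ≤ m, ∀ r ≤ k,
    (hybrid k r (Cx.submatrix (Fin.castLE hk) (Fin.castLE hk))
                (Cy.submatrix (Fin.castLE hk) (Fin.castLE hk))).det ≠ 0

theorem Fin.sum_univ_eq_sum_castLE {M : Type*} [AddCommMonoid M] {k n : ℕ} (h : k ≤ n)
    (f : Fin n → M) (hf : ∀ q : Fin n, k ≤ q.val → f q = 0) :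
    ∑ q, f q = ∑ q : Fin k, f (q.castLE h) := by
  calc ∑ q, f q = ∑ q ∈ Finset.univ.map (Fin.castLEEmb h), f q := by
        refine (Finset.sum_subset (Finset.subset_univ _) fun q _ hq => hf q ?_).symm
        by_contra! hqk
        exact hq (Finset.mem_map.2 ⟨⟨q, hqk⟩, Finset.mem_univ _, rfl⟩)
    _ = ∑ q : Fin k, f (q.castLE h) := Finset.sum_map _ _ _

namespace Matrix

variable {R α β : Type*} [NonUnitalNonAssocSemiring R] {k n : ℕ} (h : k ≤ n)

theorem submatrix_castLE_mul_of_isLowerTriangular {L : Matrix (Fin n) (Fin n) R}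
    (hL : L.IsLowerTriangular) (M : Matrix (Fin n) α R) (f : β → α) :
    (L * M).submatrix (Fin.castLE h) f
      = L.submatrix (Fin.castLE h) (Fin.castLE h) * M.submatrix (Fin.castLE h) f := by
  ext i j
  refine Fin.sum_univ_eq_sum_castLE h _ fun q hq => mul_eq_zero_of_left ?_ _
  refine hL (show i.castLE h < q from ?_)
  rw [Fin.lt_def, Fin.val_castLE]
  omega

theorem mul_submatrix_castLE_of_isUpperTriangular {U : Matrix (Fin n) (Fin n) R}
    (hU : U.IsUpperTriangular) (M : Matrix α (Fin n) R) (f : β → α) :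
    (M * U).submatrix f (Fin.castLE h)
      = M.submatrix f (Fin.castLE h) * U.submatrix (Fin.castLE h) (Fin.castLE h) := by
  ext i j
  refine Fin.sum_univ_eq_sum_castLE h _ fun q hq => mul_eq_zero_of_right _ ?_
  refine hU (show j.castLE h < q from ?_)
  rw [Fin.lt_def, Fin.val_castLE]
  omega

end Matrix

section Unitriangular

variable {k n : ℕ} {L U : Matrix (Fin n) (Fin n) (ZMod 2)}

theorem IsLowerUni.isLowerTriangular (hL : IsLowerUni L) : L.IsLowerTriangular :=
  fun _ _ hij => hL.2 _ _ hij

theorem IsUpperUni.isUpperTriangular (hU : IsUpperUni U) : U.IsUpperTriangular :=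
  fun _ _ hij => hU.2 _ _ hij

theorem IsLowerUni.det (hL : IsLowerUni L) : L.det = 1 := by
  rw [det_of_isLowerTriangular L hL.isLowerTriangular]
  exact Finset.prod_eq_one fun i _ => hL.1 i

theorem IsUpperUni.det (hU : IsUpperUni U) : U.det = 1 := by
  rw [det_of_isUpperTriangular hU.isUpperTriangular]
  exact Finset.prod_eq_one fun i _ => hU.1 i

theorem IsLowerUni.submatrix_castLE (hL : IsLowerUni L) (h : k ≤ n) :
    IsLowerUni (L.submatrix (Fin.castLE h) (Fin.castLE h)) :=
  ⟨fun _ => hL.1 _, fun _ _ hij => hL.2 _ _ hij⟩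

theorem IsUpperUni.submatrix_castLE (hU : IsUpperUni U) (h : k ≤ n) :
    IsUpperUni (U.submatrix (Fin.castLE h) (Fin.castLE h)) :=
  ⟨fun _ => hU.1 _, fun _ _ hij => hU.2 _ _ hij⟩

end Unitriangular

section Hybrid

variable {k r : ℕ}

theorem hybrid_mul_right (A B Q : Matrix (Fin k) (Fin k) (ZMod 2)) :
    hybrid k r (A * Q) (B * Q) = hybrid k r A B * Q := by
  ext i j
  by_cases h : i.val < k - r <;> simp [hybrid, mul_apply, h]

def finSubSumEquiv (hr : r ≤ k) : Fin (k - r) ⊕ Fin r ≃ Fin k :=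
  finSumFinEquiv.trans (finCongr (Nat.sub_add_cancel hr))

theorem hybrid_submatrix_finSubSumEquiv (hr : r ≤ k) (A B : Matrix (Fin k) (Fin k) (ZMod 2)) :
    (hybrid k r A B).submatrix (finSubSumEquiv hr) id
      = fromRows (A.submatrix (Fin.castLE (k.sub_le r)) id) (B.submatrix (Fin.castLE hr) id) := by
  ext (i | i) j
  all_goals simp [hybrid, finSubSumEquiv, Fin.castLE, Fin.cast, Fin.castAdd]

theorem det_hybrid_mul_left (hr : r ≤ k) {La Lb : Matrix (Fin k) (Fin k) (ZMod 2)}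
    (hLa : IsLowerUni La) (hLb : IsLowerUni Lb) (A B : Matrix (Fin k) (Fin k) (ZMod 2)) :
    (hybrid k r (La * A) (Lb * B)).det = (hybrid k r A B).det := by
  set e := finSubSumEquiv hr
  have h_reindex (C D : Matrix (Fin k) (Fin k) (ZMod 2)) :
      hybrid k r C D = ((hybrid k r C D).submatrix e id).submatrix e.symm id := by
    simp
  set c₁ := Fin.castLE (k.sub_le r)
  set c₂ := Fin.castLE hr
  have h_rows : fromRows ((La * A).submatrix c₁ id) ((Lb * B).submatrix c₂ id)
      = fromBlocks (La.submatrix c₁ c₁) 0 0 (Lb.submatrix c₂ c₂)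
        * fromRows (A.submatrix c₁ id) (B.submatrix c₂ id) := by
    rw [fromBlocks_mul_fromRows, Matrix.zero_mul, Matrix.zero_mul, add_zero, zero_add,
      submatrix_castLE_mul_of_isLowerTriangular _ hLa.isLowerTriangular,
      submatrix_castLE_mul_of_isLowerTriangular _ hLb.isLowerTriangular]
  rw [h_reindex (La * A), h_reindex A, hybrid_submatrix_finSubSumEquiv,
    hybrid_submatrix_finSubSumEquiv, h_rows, submatrix_mul _ _ _ e.symm _ e.symm.bijective, det_mul,
    det_submatrix_equiv_self, det_fromBlocks_zero₂₁, (hLa.submatrix_castLE _).det,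
    (hLb.submatrix_castLE _).det, one_mul, one_mul]

end Hybrid

/-- Progressive pairs are preserved by left multiplication by lower
unitriangular matrices and simultaneous right multiplication by an upper
unitriangular matrix. -/
theorem progressivePair_mul (m : ℕ)
    (Cx Cy U Lx Ly : Matrix (Fin m) (Fin m) (ZMod 2))
    (hp : ProgressivePair Cx Cy) (hU : IsUpperUni U)
    (hLx : IsLowerUni Lx) (hLy : IsLowerUni Ly) :
    ProgressivePair (Lx * Cx * U) (Ly * Cy * U) := by
  intro k hk r hr
  rw [mul_submatrix_castLE_of_isUpperTriangular hk hU.isUpperTriangular,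
    mul_submatrix_castLE_of_isUpperTriangular hk hU.isUpperTriangular,
    submatrix_castLE_mul_of_isLowerTriangular hk hLx.isLowerTriangular,
    submatrix_castLE_mul_of_isLowerTriangular hk hLy.isLowerTriangular, hybrid_mul_right,
    det_mul, (hU.submatrix_castLE hk).det, mul_one,
    det_hybrid_mul_left hr (hLx.submatrix_castLE hk) (hLy.submatrix_castLE hk)]
  exact hp k hk r hr
end

section
/- A pair (I, C_y) of m×m matrices over GF(2), with I the identity, is progressive if and only if every shifted leading minor of C_y is nonzero, where a shifted leading minor is the determinant of the submatrix formed by the first r rows and r consecutive columns, for any r. -/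
open Matrix

/-- A shifted leading minor: the determinant of the submatrix formed by the
first `r` rows and the `r` consecutive columns `j+1, ..., j+r` (1-indexed). -/
def shiftedMinor {m : ℕ} (C : Matrix (Fin m) (Fin m) (ZMod 2)) (r j : ℕ)
    (h : j + r ≤ m) : ZMod 2 :=
  (C.submatrix
    (fun i : Fin r => (⟨i.val, lt_of_lt_of_le i.isLt (le_trans (Nat.le_add_left r j) h)⟩ : Fin m))
    (fun i : Fin r => (⟨j + i.val, lt_of_lt_of_le (Nat.add_lt_add_left i.isLt j) h⟩ : Fin m))).det

/- With `k = j + r`, reindexing `Fin (j + r)` as `Fin j ⊕ Fin r` makes the hybrid matrix of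
`(I, A)` block lower triangular with identity upper-left block, so its determinant is that of the
lower-right block: the first `r` rows and last `r` columns of `A`. For `A` the leading `k × k`
block of `C_y`, this block is exactly the shifted leading minor with shift `j = k - r`. -/

theorem det_hybrid_one (j r : ℕ) (A : Matrix (Fin (j + r)) (Fin (j + r)) (ZMod 2)) :
    (hybrid (j + r) r 1 A).det =
      (A.submatrix (Fin.castLE (Nat.le_add_left r j)) (Fin.natAdd j)).det := by
  rw [← det_submatrix_equiv_self finSumFinEquiv]
  have hblocks : (hybrid (j + r) r 1 A).submatrix finSumFinEquiv finSumFinEquiv =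
      fromBlocks 1 0 (A.submatrix (Fin.castLE (Nat.le_add_left r j)) (Fin.castAdd r))
        (A.submatrix (Fin.castLE (Nat.le_add_left r j)) (Fin.natAdd j)) := by
    ext (i | i) (i' | i') <;> simp [hybrid, one_apply, Fin.ext_iff, Fin.castLE]
    omega
  rw [hblocks, det_fromBlocks_zero₁₂, det_one, one_mul]

theorem det_hybrid_one_submatrix_eq_shiftedMinor {m : ℕ} (C : Matrix (Fin m) (Fin m) (ZMod 2))
    (r j : ℕ) (h : j + r ≤ m) :
    (hybrid (j + r) r ((1 : Matrix (Fin m) (Fin m) (ZMod 2)).submatrix (Fin.castLE h) (Fin.castLE h))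
      (C.submatrix (Fin.castLE h) (Fin.castLE h))).det = shiftedMinor C r j h := by
  rw [submatrix_one _ (Fin.castLE_injective h), det_hybrid_one]
  rfl

/-- `(I, C_y)` is a progressive pair iff all shifted leading minors of `C_y`
are nonzero. -/
theorem progressivePair_one_iff (m : ℕ) (Cy : Matrix (Fin m) (Fin m) (ZMod 2)) :
    ProgressivePair 1 Cy ↔
      ∀ r j, ∀ h : j + r ≤ m, shiftedMinor Cy r j h ≠ 0 := by
  constructor
  · intro hprog r j h
    rw [← det_hybrid_one_submatrix_eq_shiftedMinor]
    exact hprog (j + r) h r (Nat.le_add_left r j)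
  · intro hminor k hk r hr
    obtain ⟨j, rfl⟩ := Nat.exists_eq_add_of_le' hr
    rw [det_hybrid_one_submatrix_eq_shiftedMinor]
    exact hminor r j hk
end

section
/- Every shifted leading minor of the binary Pascal matrix P (with entries C(j-1,i-1) mod 2) equals 1; consequently the pair (I, P) is progressive. -/
open Matrix

/-!
The matrix `(C(j + c, i))_{i,c<r}` factors, by Vandermonde's identity, as a lower unitriangular
matrix `(C(j, i - k))` times the upper unitriangular Pascal matrix `(C(c, k))`, so its determinant
is `1` over every commutative ring; over `ZMod 2` it is the shifted minor of `P` with shift `j`.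
After reordering rows and columns, the hybrid matrix of `(I, C)` of size `a + r` is block lower
triangular with diagonal blocks `I` and the shifted minor matrix of `C` with shift `a`, so
`(I, P)` is progressive because all shifted minors of `P` are `1`.
-/

namespace Matrix

variable (R : Type*) [CommRing R]

def shiftedPascal (r j : ℕ) : Matrix (Fin r) (Fin r) R :=
  of fun i c => ((j + c : ℕ).choose i : R)

theorem shiftedPascal_eq_mul (r j : ℕ) :
    shiftedPascal R r j =
      (of fun i k : Fin r => if k ≤ i then ((j.choose (i - k) : ℕ) : R) else 0) *
        shiftedPascal R r 0 := by
  ext i c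
  have hi : (i : ℕ) + 1 ≤ r := i.isLt
  have vandermonde :
      (j + c).choose i = ∑ k ∈ Finset.range (i + 1), j.choose (i - k) * (c : ℕ).choose k := by
    rw [add_comm j, Nat.add_choose_eq, Finset.Nat.sum_antidiagonal_eq_sum_range_succ
      (fun a b => (c : ℕ).choose a * j.choose b)]
    simp only [mul_comm]
  simp only [shiftedPascal, of_apply, mul_apply, zero_add, ite_mul, zero_mul,
    Fin.le_iff_val_le_val]
  rw [vandermonde, Fin.sum_univ_eq_sum_range (fun k => if k ≤ (i : ℕ) then
    ((j.choose (i - k) : ℕ) : R) * ((c : ℕ).choose k : R) else 0), ← Finset.sum_filter]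
  push_cast
  congr 1
  ext k
  simp only [Finset.mem_range, Finset.mem_filter]
  omega

theorem det_shiftedPascal (r j : ℕ) : (shiftedPascal R r j).det = 1 := by
  rw [shiftedPascal_eq_mul, det_mul, det_of_isLowerTriangular, det_of_isUpperTriangular]
  · simp [shiftedPascal]
  · intro i k hki
    simp [shiftedPascal, Nat.choose_eq_zero_of_lt (show (k : ℕ) < i from hki)]
  · intro i k (hik : i < k)
    simp [not_le.2 hik]

end Matrix

open Matrix

theorem shiftedMinor_pascal {m r j : ℕ} (h : j + r ≤ m) : shiftedMinor (pascal m) r j h = 1 :=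
  det_shiftedPascal (ZMod 2) r j

theorem pascal_submatrix_castLE {k m : ℕ} (hk : k ≤ m) :
    (pascal m).submatrix (Fin.castLE hk) (Fin.castLE hk) = pascal k :=
  rfl

theorem det_hybrid_one_s12 (a r : ℕ) (C : Matrix (Fin (a + r)) (Fin (a + r)) (ZMod 2)) :
    (hybrid (a + r) r 1 C).det = shiftedMinor C r a le_rfl := by
  rw [← det_submatrix_equiv_self finSumFinEquiv]
  have hblocks : (hybrid (a + r) r 1 C).submatrix finSumFinEquiv finSumFinEquiv =
      fromBlocks 1 0 (C.submatrix (Fin.castLE (Nat.le_add_left r a)) (Fin.castAdd r))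
        (C.submatrix (Fin.castLE (Nat.le_add_left r a)) (Fin.natAdd a)) := by
    ext (i | i) (c | c)
    · simp [hybrid, one_apply, Fin.ext_iff]
    · simp [hybrid, one_apply, Fin.ext_iff]
      omega
    all_goals simp [hybrid, Fin.castLE]
  rw [hblocks, det_fromBlocks_zero₁₂, det_one, one_mul]
  rfl

/-- Every shifted leading minor of the binary Pascal matrix equals 1;
consequently `(I, P)` is a progressive pair. -/
theorem pascal_shiftedMinors_and_progressive (m : ℕ) :
    (∀ r j, ∀ h : j + r ≤ m, shiftedMinor (pascal m) r j h = 1) ∧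
    ProgressivePair 1 (pascal m) := by
  refine ⟨fun r j h => shiftedMinor_pascal h, fun k hk r hr => ?_⟩
  obtain ⟨a, rfl⟩ := Nat.exists_eq_add_of_le' hr
  rw [submatrix_one _ (Fin.castLE_injective hk), pascal_submatrix_castLE, det_hybrid_one_s12,
    shiftedMinor_pascal]
  exact one_ne_zero
end

section
/- If m is a power of 2, then over GF(2) the matrix L_LP defined by L_{11}=1, L_{i1}=L_{1j}=0 for i,j ≥ 2, and L_{ij} = C(i-2, j-2) mod 2 for 2 ≤ i,j ≤ m, satisfies L_LP^{-1} = L_LP, and P J L_LP^{-1} = U_LP J, where U_LP is the upper unitriangular matrix with all entries on and above the diagonal equal to 1, P is the binary Pascal matrix, and J is the anti-diagonal matrix. -/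
/-!
Indices are 0-based. Over GF(2) the Pascal matrix is an involution, because
`∑ⱼ C(k, j) C(j, i) = 2^(k-i) C(k, i)`; the lower-right block of `L_LP` is its transpose, so
`L_LP² = 1`. For the second identity write `m = N + 1 = 2^n`. Column `0` of `P J L_LP` is
`C(N, i)`, and for `k ≥ 1` its entry is the Chu–Vandermonde sum
`∑ⱼ C(N-1-j, i) C(j, k-1) = C(N, i+k)`. Finally `C(N, r)` is odd for every `r ≤ N`, since
`C(N, r) + C(N, r+1) = C(2^n, r+1)` is even, so both sides are `1` exactly when `i + k ≤ N`.
-/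

open Matrix

/-- The Larcher–Pillichshammer lower unitriangular matrix: `L₁₁ = 1`,
`L_{i1} = L_{1j} = 0` for `i, j ≥ 2`, and `L_{ij} = C(i-2, j-2) mod 2`
for `2 ≤ i, j ≤ m` (1-indexed). -/
def LLP (m : ℕ) : Matrix (Fin m) (Fin m) (ZMod 2) :=
  fun i j =>
    if i.val = 0 ∧ j.val = 0 then 1
    else if i.val = 0 ∨ j.val = 0 then 0
    else (Nat.choose (i.val - 1) (j.val - 1) : ZMod 2)

def ULP (m : ℕ) : Matrix (Fin m) (Fin m) (ZMod 2) :=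
  fun i j => if i ≤ j then 1 else 0

open Finset

theorem Nat.sum_range_choose_mul_choose {a N : ℕ} (h : a < N) (b : ℕ) :
    ∑ j ∈ range N, a.choose j * j.choose b = a.choose b * 2 ^ (a - b) := by
  rcases lt_or_ge a b with hab | hba
  · rw [Nat.choose_eq_zero_of_lt hab, zero_mul]
    refine sum_eq_zero fun j _ => ?_
    rcases le_or_gt j a with hja | haj
    · rw [Nat.choose_eq_zero_of_lt (hja.trans_lt hab), mul_zero]
    · rw [Nat.choose_eq_zero_of_lt haj, zero_mul]
  obtain ⟨c, rfl⟩ := Nat.exists_eq_add_of_le hba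
  obtain ⟨d, rfl⟩ := Nat.exists_eq_add_of_lt h
  have hlow : ∑ j ∈ range b, (b + c).choose j * j.choose b = 0 :=
    sum_eq_zero fun j hj => by rw [Nat.choose_eq_zero_of_lt (mem_range.1 hj), mul_zero]
  have hhigh :
      ∑ j ∈ range d, (b + c).choose (b + (c + 1) + j) * (b + (c + 1) + j).choose b = 0 :=
    sum_eq_zero fun j _ => by rw [Nat.choose_eq_zero_of_lt (by omega), zero_mul]
  rw [show b + c + d + 1 = b + (c + 1) + d by omega, sum_range_add, sum_range_add, hlow, hhigh,
    zero_add, add_zero, Nat.add_sub_cancel_left, ← Nat.sum_range_choose, mul_sum]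
  refine sum_congr rfl fun j _ => ?_
  rw [Nat.choose_mul (Nat.le_add_right b j), Nat.add_sub_cancel_left, Nat.add_sub_cancel_left]

theorem Nat.sum_antidiagonal_choose_mul_choose (a b n : ℕ) :
    ∑ ij ∈ antidiagonal n, ij.1.choose a * ij.2.choose b = (n + 1).choose (a + b + 1) := by
  induction n generalizing b with
  | zero => cases a <;> cases b <;> simp <;> rw [Nat.choose_eq_zero_of_lt (by omega)]
  | succ n ih =>
    rw [Nat.sum_antidiagonal_succ']
    cases b with
    | zero =>
      have h0 := ih 0
      simp only [Nat.choose_zero_right, mul_one, add_zero] at h0 ⊢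
      rw [h0, Nat.choose_succ_succ' (n + 1) a]
    | succ b =>
      have hsplit : ∀ p ∈ antidiagonal n, p.1.choose a * (p.2 + 1).choose (b + 1) =
          p.1.choose a * p.2.choose b + p.1.choose a * p.2.choose (b + 1) := fun p _ => by
        rw [Nat.choose_succ_succ', mul_add]
      rw [sum_congr rfl hsplit, sum_add_distrib, ih, ih, Nat.choose_zero_succ, mul_zero, zero_add,
        show a + (b + 1) + 1 = a + b + 1 + 1 by omega, Nat.choose_succ_succ' (n + 1)]

theorem ZMod.natCast_choose_eq_one_of_succ_eq_two_pow {n N : ℕ} (hN : N + 1 = 2 ^ n) {r : ℕ}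
    (hr : r ≤ N) : (N.choose r : ZMod 2) = 1 := by
  induction r with
  | zero => simp
  | succ r ih =>
    have hsum : (N.choose (r + 1) : ZMod 2) + 1 = 0 := by
      rw [← ih (by omega), ← Nat.cast_add, add_comm, ← Nat.choose_succ_succ', hN,
        ZMod.natCast_eq_zero_iff]
      exact Nat.prime_two.dvd_choose_pow r.succ_ne_zero (by omega)
    simpa using eq_neg_of_add_eq_zero_left hsum

theorem pascal_mul_self (m : ℕ) : pascal m * pascal m = 1 := by
  ext i k
  calc (pascal m * pascal m) i k
        = ((∑ j ∈ range m, k.val.choose j * j.choose i : ℕ) : ZMod 2) := by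
        rw [mul_apply, Nat.cast_sum, ← Fin.sum_univ_eq_sum_range]
        simp [pascal, mul_comm]
    _ = ((k.val.choose i * 2 ^ (k.val - i) : ℕ) : ZMod 2) := by
        rw [Nat.sum_range_choose_mul_choose k.isLt]
    _ = (1 : Matrix (Fin m) (Fin m) (ZMod 2)) i k := by
        rcases lt_trichotomy i k with h | rfl | h
        · have h2 : (2 : ZMod 2) = 0 := rfl
          simp [one_apply, h.ne, h2, Nat.sub_ne_zero_of_lt (Fin.lt_def.1 h)]
        · simp
        · simp [one_apply, h.ne', Nat.choose_eq_zero_of_lt (Fin.lt_def.1 h)]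

@[simp] theorem LLP_zero_zero (m : ℕ) : LLP (m + 1) 0 0 = 1 := by simp [LLP]
@[simp] theorem LLP_zero_succ {m : ℕ} (j : Fin m) : LLP (m + 1) 0 j.succ = 0 := by simp [LLP]
@[simp] theorem LLP_succ_zero {m : ℕ} (i : Fin m) : LLP (m + 1) i.succ 0 = 0 := by simp [LLP]
@[simp] theorem LLP_succ_succ {m : ℕ} (i j : Fin m) :
    LLP (m + 1) i.succ j.succ = pascal m j i := by
  simp [LLP, pascal]

theorem LLP_mul_self (m : ℕ) : LLP m * LLP m = 1 := by
  cases m with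
  | zero => exact Subsingleton.elim _ _
  | succ m =>
    ext i k
    induction i using Fin.cases <;> induction k using Fin.cases <;>
      simp [mul_apply, Fin.sum_univ_succ, one_apply, eq_comm (a := (0 : Fin (m + 1)))]
    case succ.succ i k =>
      rw [sum_congr rfl fun x _ => mul_comm _ _, ← mul_apply, pascal_mul_self, one_apply]
      exact if_congr eq_comm rfl rfl

theorem mul_antiDiag_apply {m : ℕ} (A : Matrix (Fin m) (Fin m) (ZMod 2)) (i j : Fin m) :
    (A * antiDiag m) i j = A i j.rev := by
  rw [mul_apply, sum_eq_single j.rev]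
  · simp [antiDiag]; omega
  · intro b _ hb
    simp only [antiDiag, mul_ite, mul_one, mul_zero, ite_eq_right_iff]
    exact fun h => absurd (Fin.ext (by simp; omega)) hb
  · simp

theorem pascal_mul_antiDiag_mul_LLP {n m : ℕ} (hm : m = 2 ^ n) :
    pascal m * antiDiag m * LLP m = ULP m * antiDiag m := by
  obtain ⟨m, rfl⟩ := Nat.exists_eq_add_one.mpr (hm ▸ Nat.two_pow_pos n)
  ext i k
  rw [mul_antiDiag_apply, mul_apply, Fin.sum_univ_succ]
  induction k using Fin.cases with
  | zero =>
    simpa [mul_antiDiag_apply, ULP, pascal, Fin.le_last] using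
      ZMod.natCast_choose_eq_one_of_succ_eq_two_pow hm i.is_le
  | succ k =>
    obtain ⟨m, rfl⟩ := Nat.exists_eq_add_one.mpr k.pos
    have hsum : ∑ j : Fin (m + 1), ((m - j).choose i * j.val.choose k : ZMod 2) =
        (m + 1).choose (k + i + 1) := by
      rw [← Nat.sum_antidiagonal_choose_mul_choose,
        Nat.sum_antidiagonal_eq_sum_range_succ (fun a b => a.choose k * b.choose i), Nat.cast_sum,
        ← Fin.sum_univ_eq_sum_range]
      simp [mul_comm]
    simp only [mul_antiDiag_apply, pascal, Fin.rev_zero, Fin.val_last, LLP_zero_succ, mul_zero,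
      Fin.val_rev, Fin.val_succ, Nat.reduceSubDiff, LLP_succ_succ, hsum, zero_add, ULP, Fin.le_def]
    split_ifs with h
    · exact ZMod.natCast_choose_eq_one_of_succ_eq_two_pow hm (by omega)
    · rw [Nat.choose_eq_zero_of_lt (by omega), Nat.cast_zero]

/-- If `m` is a power of 2, then `L_LP⁻¹ = L_LP` and `P J L_LP⁻¹ = U_LP J`. -/
theorem LLP_inv_and_identity (n m : ℕ) (hm : m = 2 ^ n) :
    (LLP m)⁻¹ = LLP m ∧
    pascal m * antiDiag m * (LLP m)⁻¹ = ULP m * antiDiag m := by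
  have hinv : (LLP m)⁻¹ = LLP m := inv_eq_left_inv (LLP_mul_self m)
  rw [hinv]
  exact ⟨rfl, pascal_mul_antiDiag_mul_LLP hm⟩
end

section
/- If A = (1, 0, 0, ...) in the self-similar matrix structure (columns alternate shifted copies of A and B), then the two vectors B making the matrix progressive are (0, ξ_1, ξ_2, ...) and (1, ξ_1, ξ_2, ...), where ξ_i = 1 if and only if i is a power of 2. -/
open Matrix

/-- A progressive matrix: all leading principal minors are nonzero. -/
def ProgressiveMat {m : ℕ} (C : Matrix (Fin m) (Fin m) (ZMod 2)) : Prop :=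
  ∀ k, ∀ hk : k ≤ m, (C.submatrix (Fin.castLE hk) (Fin.castLE hk)).det ≠ 0
/-- The self-similar matrix built from column vectors `A` and `B`: the first
column is `A`, the second is `B`, and (1-indexed) columns `2k+1`, `2k+2` are
`A`, `B` shifted down by `k` positions with zeros above. -/
def selfSim (m : ℕ) (A B : Fin m → ZMod 2) : Matrix (Fin m) (Fin m) (ZMod 2) :=
  fun i j =>
    if h : j.val / 2 ≤ i.val then
      (if j.val % 2 = 0 then
        A ⟨i.val - j.val / 2, Nat.lt_of_le_of_lt (Nat.sub_le _ _) i.isLt⟩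
      else
        B ⟨i.val - j.val / 2, Nat.lt_of_le_of_lt (Nat.sub_le _ _) i.isLt⟩)
    else 0

open scoped Classical


noncomputable def xi (n : ℕ) : ZMod 2 := if ∃ k : ℕ, n = 2 ^ k then 1 else 0

lemma xi_one : xi 1 = 1 := by unfold xi; rw [if_pos ⟨0, rfl⟩]
lemma xi_two : xi 2 = 1 := by unfold xi; rw [if_pos ⟨1, rfl⟩]

lemma xi_odd {k : ℕ} (hk : 1 ≤ k) : xi (2 * k + 1) = 0 := by
  unfold xi; rw [if_neg]
  rintro ⟨j, hj⟩
  cases j with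
  | zero => rw [pow_zero] at hj; omega
  | succ j => rw [pow_succ] at hj; omega

lemma xi_double {k : ℕ} (hk : 1 ≤ k) : xi (2 * k) = xi k := by
  unfold xi
  by_cases h : ∃ j : ℕ, k = 2 ^ j
  · obtain ⟨j, rfl⟩ := h
    rw [if_pos ⟨j + 1, by rw [pow_succ]; ring⟩, if_pos ⟨j, rfl⟩]
  · rw [if_neg, if_neg h]
    rintro ⟨j, hj⟩
    cases j with
    | zero => rw [pow_zero] at hj; omega
    | succ j => exact h ⟨j, by rw [pow_succ] at hj; omega⟩

lemma zmod2_units_cast (u : ℤˣ) : ((u : ℤ) : ZMod 2) = 1 := by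
  rcases Int.units_eq_one_or u with h | h <;> rw [h] <;> decide

lemma det_sub2 {S : Type} [Fintype S] [DecidableEq S] {n : ℕ}
    (M : Matrix (Fin n) (Fin n) (ZMod 2)) (er ec : S ≃ Fin n) :
    (M.submatrix er ec).det = M.det := by
  have h : M.submatrix er ec = (M.submatrix ec ec).submatrix (er.trans ec.symm : Equiv.Perm S) id := by
    ext i j; simp [Matrix.submatrix_apply]
  rw [h, Matrix.det_permute, Matrix.det_submatrix_equiv_self]
  norm_num [zmod2_units_cast]

noncomputable def mkE {S : Type} [Fintype S] [DecidableEq S] {n : ℕ} (f : S → Fin n)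
    (hinj : Function.Injective f) (hcard : Fintype.card S = n) : S ≃ Fin n :=
  Equiv.ofBijective f ((Fintype.bijective_iff_injective_and_card f).mpr ⟨hinj, by simpa using hcard⟩)

@[simp] lemma mkE_apply {S : Type} [Fintype S] [DecidableEq S] {n : ℕ} (f : S → Fin n)
    (hinj : Function.Injective f) (hcard : Fintype.card S = n) (x : S) :
    mkE f hinj hcard x = f x := rfl

noncomputable def Hk (c p : ℕ) : Matrix (Fin p) (Fin p) (ZMod 2) :=
  fun r s => xi (c + r.val + s.val)

lemma step2 (p u v : ℕ) (hu : p = u + v) (h2 : v ≤ u) (h3 : u ≤ v + 1) :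
    (Hk 2 p).det = (Hk 1 u).det * (Hk 2 v).det := by
  obtain ⟨e, he1, he2⟩ : ∃ e : (Fin u ⊕ Fin v) ≃ Fin p,
      (∀ a, (e (Sum.inl a)).val = 2 * a.val) ∧ (∀ b, (e (Sum.inr b)).val = 2 * b.val + 1) := by
    refine ⟨mkE (Sum.elim (fun a => (⟨2 * a.val, by have := a.isLt; omega⟩ : Fin p))
                  (fun b => ⟨2 * b.val + 1, by have := b.isLt; omega⟩)) ?_ (by simp; omega),
      fun _ => rfl, fun _ => rfl⟩
    rintro (a | a) (b | b) h <;> simp only [Sum.elim_inl, Sum.elim_inr, Fin.mk.injEq] at h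
    · exact congrArg Sum.inl (Fin.ext (by omega))
    · exact absurd h (by omega)
    · exact absurd h (by omega)
    · exact congrArg Sum.inr (Fin.ext (by omega))
  have hsub : (Hk 2 p).submatrix e e = fromBlocks (Hk 1 u) 0 0 (Hk 2 v) := by
    ext x y
    rcases x with a | a <;> rcases y with b | b <;>
      simp only [submatrix_apply, fromBlocks_apply₁₁, fromBlocks_apply₁₂,
        fromBlocks_apply₂₁, fromBlocks_apply₂₂, Hk, Matrix.zero_apply, he1, he2]
    · rw [show 2 + 2 * a.val + (2 * b.val) = 2 * (1 + a.val + b.val) by ring,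
        xi_double (by omega)]
    · rw [show 2 + 2 * a.val + (2 * b.val + 1) = 2 * (a.val + b.val + 1) + 1 by ring,
        xi_odd (by omega)]
    · rw [show 2 + (2 * a.val + 1) + (2 * b.val) = 2 * (a.val + b.val + 1) + 1 by ring,
        xi_odd (by omega)]
    · rw [show 2 + (2 * a.val + 1) + (2 * b.val + 1) = 2 * (2 + a.val + b.val) by ring,
        xi_double (by omega)]
  rw [← det_sub2 (Hk 2 p) e e, hsub, det_fromBlocks_zero₂₁]

lemma step1even (p u : ℕ) (hu : p = u + u) :
    (Hk 1 p).det = (Hk 1 u).det * (Hk 1 u).det := by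
  obtain ⟨er, hr1, hr2⟩ : ∃ e : (Fin u ⊕ Fin u) ≃ Fin p,
      (∀ a, (e (Sum.inl a)).val = 2 * a.val + 1) ∧ (∀ b, (e (Sum.inr b)).val = 2 * b.val) := by
    refine ⟨mkE (Sum.elim (fun a => (⟨2 * a.val + 1, by have := a.isLt; omega⟩ : Fin p))
                  (fun b => ⟨2 * b.val, by have := b.isLt; omega⟩)) ?_ (by simp; omega),
      fun _ => rfl, fun _ => rfl⟩
    rintro (a | a) (b | b) h <;> simp only [Sum.elim_inl, Sum.elim_inr, Fin.mk.injEq] at h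
    · exact congrArg Sum.inl (Fin.ext (by omega))
    · exact absurd h (by omega)
    · exact absurd h (by omega)
    · exact congrArg Sum.inr (Fin.ext (by omega))
  obtain ⟨ec, hc1, hc2⟩ : ∃ e : (Fin u ⊕ Fin u) ≃ Fin p,
      (∀ a, (e (Sum.inl a)).val = 2 * a.val) ∧ (∀ b, (e (Sum.inr b)).val = 2 * b.val + 1) := by
    refine ⟨mkE (Sum.elim (fun a => (⟨2 * a.val, by have := a.isLt; omega⟩ : Fin p))
                  (fun b => ⟨2 * b.val + 1, by have := b.isLt; omega⟩)) ?_ (by simp; omega),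
      fun _ => rfl, fun _ => rfl⟩
    rintro (a | a) (b | b) h <;> simp only [Sum.elim_inl, Sum.elim_inr, Fin.mk.injEq] at h
    · exact congrArg Sum.inl (Fin.ext (by omega))
    · exact absurd h (by omega)
    · exact absurd h (by omega)
    · exact congrArg Sum.inr (Fin.ext (by omega))
  have hsub : (Hk 1 p).submatrix er ec =
      fromBlocks (Hk 1 u) 0
        (Matrix.of fun (a b : Fin u) => xi (1 + 2 * a.val + 2 * b.val)) (Hk 1 u) := by
    ext x y
    rcases x with a | a <;> rcases y with b | b <;>
      simp only [submatrix_apply, fromBlocks_apply₁₁, fromBlocks_apply₁₂,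
        fromBlocks_apply₂₁, fromBlocks_apply₂₂, Hk, Matrix.zero_apply, Matrix.of_apply,
        hr1, hr2, hc1, hc2]
    · rw [show 1 + (2 * a.val + 1) + (2 * b.val) = 2 * (1 + a.val + b.val) by ring,
        xi_double (by omega)]
    · rw [show 1 + (2 * a.val + 1) + (2 * b.val + 1) = 2 * (a.val + b.val + 1) + 1 by ring,
        xi_odd (by omega)]
    · rw [show 1 + (2 * a.val) + (2 * b.val + 1) = 2 * (1 + a.val + b.val) by ring,
        xi_double (by omega)]
  rw [← det_sub2 (Hk 1 p) er ec, hsub, det_fromBlocks_zero₁₂]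

lemma step1odd (p v : ℕ) (hv : p = 2 * v + 1) :
    (Hk 1 p).det = (Hk 2 v).det * (Hk 2 v).det := by
  obtain ⟨er, hr1, hr2, hr3⟩ : ∃ e : (Fin v ⊕ (Fin 1 ⊕ Fin v)) ≃ Fin p,
      (∀ a, (e (Sum.inl a)).val = 2 * a.val + 1) ∧
      (∀ x, (e (Sum.inr (Sum.inl x))).val = 0) ∧
      (∀ a, (e (Sum.inr (Sum.inr a))).val = 2 * a.val + 2) := by
    refine ⟨mkE (Sum.elim (fun a => (⟨2 * a.val + 1, by have := a.isLt; omega⟩ : Fin p))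
          (Sum.elim (fun _ => ⟨0, by omega⟩)
                    (fun a => ⟨2 * a.val + 2, by have := a.isLt; omega⟩))) ?_ (by simp; omega),
      fun _ => rfl, fun _ => rfl, fun _ => rfl⟩
    rintro (a | a | a) (b | b | b) h <;>
        simp only [Sum.elim_inl, Sum.elim_inr, Fin.mk.injEq] at h
    · exact congrArg Sum.inl (Fin.ext (by omega))
    · exact absurd h (by omega)
    · exact absurd h (by omega)
    · exact absurd h (by omega)
    · exact congrArg (Sum.inr ∘ Sum.inl) (Subsingleton.elim _ _)
    · exact absurd h (by omega)
    · exact absurd h (by omega)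
    · exact absurd h (by omega)
    · exact congrArg (Sum.inr ∘ Sum.inr) (Fin.ext (by omega))
  obtain ⟨ec, hc1, hc2, hc3⟩ : ∃ e : (Fin v ⊕ (Fin 1 ⊕ Fin v)) ≃ Fin p,
      (∀ b, (e (Sum.inl b)).val = 2 * b.val + 2) ∧
      (∀ x, (e (Sum.inr (Sum.inl x))).val = 0) ∧
      (∀ b, (e (Sum.inr (Sum.inr b))).val = 2 * b.val + 1) := by
    refine ⟨mkE (Sum.elim (fun b => (⟨2 * b.val + 2, by have := b.isLt; omega⟩ : Fin p))
          (Sum.elim (fun _ => ⟨0, by omega⟩)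
                    (fun b => ⟨2 * b.val + 1, by have := b.isLt; omega⟩))) ?_ (by simp; omega),
      fun _ => rfl, fun _ => rfl, fun _ => rfl⟩
    rintro (a | a | a) (b | b | b) h <;>
        simp only [Sum.elim_inl, Sum.elim_inr, Fin.mk.injEq] at h
    · exact congrArg Sum.inl (Fin.ext (by omega))
    · exact absurd h (by omega)
    · exact absurd h (by omega)
    · exact absurd h (by omega)
    · exact congrArg (Sum.inr ∘ Sum.inl) (Subsingleton.elim _ _)
    · exact absurd h (by omega)
    · exact absurd h (by omega)
    · exact absurd h (by omega)
    · exact congrArg (Sum.inr ∘ Sum.inr) (Fin.ext (by omega))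
  set M := (Hk 1 p).submatrix er ec with hM
  have h21 : M.toBlocks₂₁ = 0 := by
    ext x b
    rcases x with x | a <;>
      simp only [Matrix.toBlocks₂₁, Matrix.of_apply, hM, submatrix_apply,
        Hk, Matrix.zero_apply, hr2, hr3, hc1]
    · rw [show 1 + 0 + (2 * b.val + 2) = 2 * (b.val + 1) + 1 by ring, xi_odd (by omega)]
    · rw [show 1 + (2 * a.val + 2) + (2 * b.val + 2) = 2 * (a.val + b.val + 2) + 1 by ring,
        xi_odd (by omega)]
  have h11 : M.toBlocks₁₁ = Hk 2 v := by
    ext a b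
    simp only [Matrix.toBlocks₁₁, Matrix.of_apply, hM, submatrix_apply, Hk, hr1, hc1]
    rw [show 1 + (2 * a.val + 1) + (2 * b.val + 2) = 2 * (2 + a.val + b.val) by ring,
      xi_double (by omega)]
  have inner : M.toBlocks₂₂.det = (Hk 2 v).det := by
    set M2 := M.toBlocks₂₂ with hM2
    have g21 : M2.toBlocks₂₁ = 0 := by
      ext a x
      simp only [hM2, Matrix.toBlocks₂₂, Matrix.toBlocks₂₁, Matrix.of_apply, hM,
        submatrix_apply, Hk, Matrix.zero_apply, hr3, hc2]
      rw [show 1 + (2 * a.val + 2) + 0 = 2 * (a.val + 1) + 1 by ring, xi_odd (by omega)]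
    have g11 : M2.toBlocks₁₁ = (1 : Matrix (Fin 1) (Fin 1) (ZMod 2)) := by
      ext x y
      simp only [hM2, Matrix.toBlocks₂₂, Matrix.toBlocks₁₁, Matrix.of_apply, hM,
        submatrix_apply, Hk, hr2, hc2]
      rw [Subsingleton.elim y x, Matrix.one_apply_eq]
      exact xi_one
    have g22 : M2.toBlocks₂₂ = Hk 2 v := by
      ext a b
      simp only [hM2, Matrix.toBlocks₂₂, Matrix.of_apply, hM,
        submatrix_apply, Hk, hr3, hc3]
      rw [show 1 + (2 * a.val + 2) + (2 * b.val + 1) = 2 * (2 + a.val + b.val) by ring,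
        xi_double (by omega)]
    rw [← Matrix.fromBlocks_toBlocks M2, g21, g11, g22, det_fromBlocks_zero₂₁,
      Matrix.det_one, one_mul]
  rw [← det_sub2 (Hk 1 p) er ec, ← hM, ← Matrix.fromBlocks_toBlocks M, h21, h11,
    det_fromBlocks_zero₂₁, inner]

lemma detHk : ∀ p : ℕ, (Hk 1 p).det = 1 ∧ (Hk 2 p).det = 1 := by
  intro p
  induction p using Nat.strong_induction_on with
  | _ p IH =>
    rcases Nat.lt_or_ge p 2 with h | h
    · interval_cases p
      · constructor <;> exact Matrix.det_isEmpty
      · constructor <;> rw [Matrix.det_fin_one]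
        · simpa [Hk] using xi_one
        · simpa [Hk] using xi_two
    · constructor
      · rcases Nat.even_or_odd p with ⟨u, hu⟩ | ⟨u, hu⟩
        · rw [step1even p u hu, (IH u (by omega)).1, one_mul]
        · rw [step1odd p u (by omega), (IH u (by omega)).2, one_mul]
      · rw [step2 p ((p + 1) / 2) (p / 2) (by omega) (by omega) (by omega),
          (IH ((p + 1) / 2) (by omega)).1, (IH (p / 2) (by omega)).2, one_mul]


lemma mainLemma (m : ℕ) (A B : Fin m → ZMod 2)
    (hA : ∀ i : Fin m, A i = if i.val = 0 then 1 else 0)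
    (hB : ∀ i : Fin m, 0 < i.val → B i = xi i.val) (n : ℕ) (hn : n ≤ m) :
    ((selfSim m A B).submatrix (Fin.castLE hn) (Fin.castLE hn)).det = 1 := by
  rcases Nat.eq_zero_or_pos n with rfl | hn0
  · exact Matrix.det_isEmpty
  obtain ⟨q, p, hqpn, hpq, hqp2⟩ : ∃ q p, n = q + p ∧ p ≤ q ∧ q ≤ p + 1 :=
    ⟨(n + 1) / 2, n / 2, by omega, by omega, by omega⟩
  obtain ⟨er, hr1, hr2⟩ : ∃ e : (Fin q ⊕ Fin p) ≃ Fin n,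
      (∀ a : Fin q, (e (Sum.inl a)).val = a.val) ∧
      (∀ b : Fin p, (e (Sum.inr b)).val = q + b.val) := by
    refine ⟨mkE (Sum.elim (fun a => (⟨a.val, by have := a.isLt; omega⟩ : Fin n))
                  (fun b => ⟨q + b.val, by have := b.isLt; omega⟩)) ?_ (by simp; omega),
      fun _ => rfl, fun _ => rfl⟩
    rintro (a | a) (b | b) h <;> simp only [Sum.elim_inl, Sum.elim_inr, Fin.mk.injEq] at h
    · exact congrArg Sum.inl (Fin.ext h)
    · exact absurd h (by have := a.isLt; omega)
    · exact absurd h (by have := b.isLt; omega)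
    · exact congrArg Sum.inr (Fin.ext (by omega))
  obtain ⟨ec, hc1, hc2⟩ : ∃ e : (Fin q ⊕ Fin p) ≃ Fin n,
      (∀ a : Fin q, (e (Sum.inl a)).val = 2 * a.val) ∧
      (∀ b : Fin p, (e (Sum.inr b)).val = 2 * (p - 1 - b.val) + 1) := by
    refine ⟨mkE (Sum.elim (fun a => (⟨2 * a.val, by have := a.isLt; omega⟩ : Fin n))
                  (fun b => ⟨2 * (p - 1 - b.val) + 1, by have := b.isLt; omega⟩)) ?_
        (by simp; omega),
      fun _ => rfl, fun _ => rfl⟩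
    rintro (a | a) (b | b) h <;> simp only [Sum.elim_inl, Sum.elim_inr, Fin.mk.injEq] at h
    · exact congrArg Sum.inl (Fin.ext (by omega))
    · exact absurd h (by omega)
    · exact absurd h (by omega)
    · exact congrArg Sum.inr (Fin.ext (by have := a.isLt; have := b.isLt; omega))
  set M := ((selfSim m A B).submatrix (Fin.castLE hn) (Fin.castLE hn)).submatrix er ec
    with hMdef
  have h21 : M.toBlocks₂₁ = 0 := by
    ext a b
    have ha := a.isLt; have hb := b.isLt
    simp only [hMdef, Matrix.toBlocks₂₁, Matrix.of_apply, submatrix_apply, selfSim,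
      Fin.coe_castLE, hr2, hc1, Matrix.zero_apply, hA, Fin.val_mk]
    rw [dif_pos (by omega), if_pos (by omega), if_neg (by omega)]
  have h11 : M.toBlocks₁₁ = (1 : Matrix (Fin q) (Fin q) (ZMod 2)) := by
    ext a b
    have ha := a.isLt; have hb := b.isLt
    simp only [hMdef, Matrix.toBlocks₁₁, Matrix.of_apply, submatrix_apply, selfSim,
      Fin.coe_castLE, hr1, hc1, hA, Fin.val_mk, Matrix.one_apply]
    by_cases hab : a = b
    · subst hab
      rw [dif_pos (by omega), if_pos (by omega), if_pos (by omega), if_pos rfl]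
    · have hab' : a.val ≠ b.val := fun hh => hab (Fin.ext hh)
      rw [if_neg hab]
      by_cases hba : b.val ≤ a.val
      · rw [dif_pos (by omega), if_pos (by omega), if_neg (by omega)]
      · rw [dif_neg (by omega)]
  have h22 : M.toBlocks₂₂ = Hk (q - p + 1) p := by
    ext a b
    have ha := a.isLt; have hb := b.isLt
    simp only [hMdef, Matrix.toBlocks₂₂, Matrix.of_apply, submatrix_apply, selfSim,
      Fin.coe_castLE, hr2, hc2, Fin.val_mk, Hk]
    rw [dif_pos (by omega), if_neg (by omega),
      hB _ (by show 0 < q + a.val - (2 * (p - 1 - b.val) + 1) / 2; omega)]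
    show xi (q + a.val - (2 * (p - 1 - b.val) + 1) / 2) = xi (q - p + 1 + a.val + b.val)
    congr 1
    omega
  have hc : q - p + 1 = 1 ∨ q - p + 1 = 2 := by omega
  rw [← det_sub2 _ er ec, ← hMdef, ← Matrix.fromBlocks_toBlocks M, h21, h11, h22,
    det_fromBlocks_zero₂₁, Matrix.det_one, one_mul]
  rcases hc with h | h <;> rw [h]
  · exact (detHk p).1
  · exact (detHk p).2

lemma selfSim_shift (m : ℕ) (A B : Fin m → ZMod 2) (x y x' y' : Fin m)
    (hx : x.val = x'.val + 1) (hy : y.val = y'.val + 2) :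
    selfSim m A B x y = selfSim m A B x' y' := by
  simp only [selfSim]
  by_cases hg : y'.val / 2 ≤ x'.val
  · rw [dif_pos (by omega), dif_pos hg]
    by_cases hp : y'.val % 2 = 0
    · rw [if_pos (by omega), if_pos hp]
      exact congrArg A (Fin.ext (by simp only [Fin.val_mk]; omega))
    · rw [if_neg (by omega), if_neg hp]
      exact congrArg B (Fin.ext (by simp only [Fin.val_mk]; omega))
  · rw [dif_neg (by omega), dif_neg hg]

/-- If `A = (1, 0, 0, ...)`, then the self-similar matrix built from `A` and
`B` is progressive iff `B` agrees with `(b₀, ξ₁, ξ₂, ...)` where `ξ_i = 1` iff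
`i` is a power of 2 (the bit `b₀` being arbitrary). -/
theorem selfSim_xi (m : ℕ) (A : Fin m → ZMod 2)
    (hA : ∀ i : Fin m, A i = if i.val = 0 then 1 else 0) (B : Fin m → ZMod 2) :
    ProgressiveMat (selfSim m A B) ↔
      ∀ i : Fin m, 0 < i.val →
        B i = (if ∃ k : ℕ, i.val = 2 ^ k then (1 : ZMod 2) else 0) := by
  constructor
  · intro hprog
    suffices key : ∀ N : ℕ, ∀ i : Fin m, i.val = N → 0 < i.val → B i = xi i.val by
      intro i hpos
      exact (key i.val i rfl hpos).trans rfl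
    intro N
    induction N using Nat.strong_induction_on with
    | _ N IH =>
      rintro ⟨n, hnm⟩ hiN hpos
      simp only [Fin.val_mk] at hiN hpos
      subst hiN
      have hB'' : ∀ j : Fin m, 0 < j.val →
          (fun j : Fin m => if j.val = 0 then B j else xi j.val) j = xi j.val := by
        intro j hj; simp only; rw [if_neg (by omega)]
      set B'' : Fin m → ZMod 2 := fun j => if j.val = 0 then B j else xi j.val with hB''def
      have h1 : n + 1 ≤ m := by omega
      set MB := (selfSim m A B).submatrix (Fin.castLE h1) (Fin.castLE h1) with hMB
      set M2 := (selfSim m A B'').submatrix (Fin.castLE h1) (Fin.castLE h1) with hM2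
      set rn : Fin (n + 1) := ⟨n, by omega⟩ with hrn
      set e1 : Fin (n + 1) → ZMod 2 := fun s => if s.val = 1 then 1 else 0 with he1
      set δ : ZMod 2 := B ⟨n, hnm⟩ - xi n with hδ
      have hentry : ∀ r s : Fin (n + 1), (r.val ≠ n ∨ s.val ≠ 1) → MB r s = M2 r s := by
        intro r s hcond
        have hrlt := r.isLt; have hslt := s.isLt
        simp only [hMB, hM2, submatrix_apply, selfSim, Fin.coe_castLE]
        by_cases hg : s.val / 2 ≤ r.val
        · rw [dif_pos hg, dif_pos hg]
          by_cases hp : s.val % 2 = 0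
          · rw [if_pos hp, if_pos hp]
          · rw [if_neg hp, if_neg hp]
            simp only [hB''def, Fin.val_mk]
            split_ifs with h0
            · rfl
            · exact IH (r.val - s.val / 2) (by omega) _ rfl (by simp only [Fin.val_mk]; omega)
        · rw [dif_neg hg, dif_neg hg]
      have hMBeq : MB = M2.updateRow rn (M2 rn + δ • e1) := by
        ext r s
        by_cases hr : r = rn
        · rw [hr, Matrix.updateRow_self]
          by_cases hs : s.val = 1
          · have hval : MB rn s = B ⟨n, hnm⟩ := by
              simp only [hMB, submatrix_apply, selfSim, Fin.coe_castLE]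
              have hrv : rn.val = n := rfl
              rw [dif_pos (by omega), if_neg (by omega)]
              exact congrArg B (Fin.ext (by simp only [Fin.val_mk]; omega))
            have hval2 : M2 rn s = xi n := by
              simp only [hM2, submatrix_apply, selfSim, Fin.coe_castLE]
              have hrv : rn.val = n := rfl
              rw [dif_pos (by omega), if_neg (by omega)]
              rw [hB'' _ (by simp only [Fin.val_mk]; omega)]
              simp only [Fin.val_mk]
              congr 1
              omega
            rw [Pi.add_apply, hval, hval2, Pi.smul_apply, he1]
            simp only [if_pos hs, smul_eq_mul, mul_one, hδ]
            ring
          · have hrhs : (M2 rn + δ • e1) s = M2 rn s := by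
              simp [he1, hs]
            rw [hrhs]
            exact hentry rn s (Or.inr hs)
        · rw [Matrix.updateRow_ne hr]
          exact hentry r s (Or.inl (fun hh => hr (Fin.ext (by simp [hrn, hh]))))
      have hN : (M2.updateRow rn e1).det = 1 := by
        have h2 : n - 1 ≤ m := by omega
        obtain ⟨er, hr1, hr2, hr3⟩ : ∃ e : (Fin 1 ⊕ (Fin 1 ⊕ Fin (n - 1))) ≃ Fin (n + 1),
            (∀ x, (e (Sum.inl x)).val = n) ∧ (∀ x, (e (Sum.inr (Sum.inl x))).val = 0) ∧
            (∀ a, (e (Sum.inr (Sum.inr a))).val = a.val + 1) := by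
          refine ⟨mkE (Sum.elim (fun _ => (⟨n, by omega⟩ : Fin (n + 1)))
                (Sum.elim (fun _ => ⟨0, by omega⟩)
                          (fun a => ⟨a.val + 1, by have := a.isLt; omega⟩))) ?_ (by simp; omega),
            fun _ => rfl, fun _ => rfl, fun _ => rfl⟩
          rintro (a | a | a) (b | b | b) h <;>
              simp only [Sum.elim_inl, Sum.elim_inr, Fin.mk.injEq] at h
          · exact congrArg Sum.inl (Subsingleton.elim _ _)
          · exact absurd h (by omega)
          · exact absurd h (by have := b.isLt; omega)
          · exact absurd h (by omega)
          · exact congrArg (Sum.inr ∘ Sum.inl) (Subsingleton.elim _ _)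
          · exact absurd h (by omega)
          · exact absurd h (by have := a.isLt; omega)
          · exact absurd h (by omega)
          · exact congrArg (Sum.inr ∘ Sum.inr) (Fin.ext (by omega))
        obtain ⟨ec, hc1, hc2, hc3⟩ : ∃ e : (Fin 1 ⊕ (Fin 1 ⊕ Fin (n - 1))) ≃ Fin (n + 1),
            (∀ x, (e (Sum.inl x)).val = 1) ∧ (∀ x, (e (Sum.inr (Sum.inl x))).val = 0) ∧
            (∀ b, (e (Sum.inr (Sum.inr b))).val = b.val + 2) := by
          refine ⟨mkE (Sum.elim (fun _ => (⟨1, by omega⟩ : Fin (n + 1)))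
                (Sum.elim (fun _ => ⟨0, by omega⟩)
                          (fun b => ⟨b.val + 2, by have := b.isLt; omega⟩))) ?_ (by simp; omega),
            fun _ => rfl, fun _ => rfl, fun _ => rfl⟩
          rintro (a | a | a) (b | b | b) h <;>
              simp only [Sum.elim_inl, Sum.elim_inr, Fin.mk.injEq] at h
          · exact congrArg Sum.inl (Subsingleton.elim _ _)
          · exact absurd h (by omega)
          · exact absurd h (by omega)
          · exact absurd h (by omega)
          · exact congrArg (Sum.inr ∘ Sum.inl) (Subsingleton.elim _ _)
          · exact absurd h (by omega)
          · exact absurd h (by omega)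
          · exact absurd h (by omega)
          · exact congrArg (Sum.inr ∘ Sum.inr) (Fin.ext (by omega))
        have hrn1 : ∀ x, er (Sum.inl x) = rn := fun x => Fin.ext (by simp [hr1, hrn])
        have hner : ∀ z, er (Sum.inr z) ≠ rn := by
          rintro (x | a) h
          · have := congrArg Fin.val h
            rw [hr2] at this
            simp [hrn] at this
            omega
          · have := congrArg Fin.val h
            rw [hr3] at this
            have := a.isLt
            simp [hrn] at *
            omega
        set N := (M2.updateRow rn e1).submatrix er ec with hNdef
        have h12 : N.toBlocks₁₂ = 0 := by
          ext x y
          rcases y with y | y <;>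
            simp only [hNdef, Matrix.toBlocks₁₂, Matrix.of_apply, submatrix_apply, hrn1,
              Matrix.updateRow_self, he1, Matrix.zero_apply, hc2, hc3] <;>
            rw [if_neg (by omega)]
        have h11 : N.toBlocks₁₁ = (1 : Matrix (Fin 1) (Fin 1) (ZMod 2)) := by
          ext x y
          simp only [hNdef, Matrix.toBlocks₁₁, Matrix.of_apply, submatrix_apply, hrn1,
            Matrix.updateRow_self, he1]
          rw [if_pos (hc1 y), Subsingleton.elim y x, Matrix.one_apply_eq]
        have g21 : N.toBlocks₂₂.toBlocks₂₁ = 0 := by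
          ext a x
          simp only [hNdef, Matrix.toBlocks₂₂, Matrix.toBlocks₂₁, Matrix.of_apply,
            submatrix_apply]
          rw [Matrix.updateRow_ne (hner _)]
          simp only [hM2, submatrix_apply, selfSim, Fin.coe_castLE, hr3, hc2, hA,
            Fin.val_mk, Matrix.zero_apply]
          rw [dif_pos (by omega)]
          norm_num
        have g11 : N.toBlocks₂₂.toBlocks₁₁ = (1 : Matrix (Fin 1) (Fin 1) (ZMod 2)) := by
          ext x y
          simp only [hNdef, Matrix.toBlocks₂₂, Matrix.toBlocks₁₁, Matrix.of_apply,
            submatrix_apply]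
          rw [Matrix.updateRow_ne (hner _)]
          simp only [hM2, submatrix_apply, selfSim, Fin.coe_castLE, hr2, hc2, hA, Fin.val_mk]
          rw [Subsingleton.elim y x, Matrix.one_apply_eq, dif_pos (by omega)]
          norm_num
        have g22 : N.toBlocks₂₂.toBlocks₂₂ =
            (selfSim m A B'').submatrix (Fin.castLE h2) (Fin.castLE h2) := by
          ext a b
          simp only [hNdef, Matrix.toBlocks₂₂, Matrix.of_apply, submatrix_apply]
          rw [Matrix.updateRow_ne (hner _)]
          simp only [hM2, submatrix_apply]
          exact selfSim_shift m A B'' _ _ _ _ (by simp [hr3]) (by simp [hc3])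
        rw [← det_sub2 _ er ec, ← hNdef, ← Matrix.fromBlocks_toBlocks N, h12, h11,
          det_fromBlocks_zero₁₂, Matrix.det_one, one_mul,
          ← Matrix.fromBlocks_toBlocks N.toBlocks₂₂, g21, g11, g22,
          det_fromBlocks_zero₂₁, Matrix.det_one, one_mul,
          mainLemma m A B'' hA hB'' (n - 1) h2]
      have hdetMB : MB.det = 1 + δ := by
        rw [hMBeq, Matrix.det_updateRow_add, Matrix.updateRow_eq_self,
          Matrix.det_updateRow_smul, hN, mul_one,
          mainLemma m A B'' hA hB'' (n + 1) h1]
      have hne : MB.det ≠ 0 := hprog (n + 1) h1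
      rw [hdetMB] at hne
      have hδ0 : δ = 0 := by
        have hz : ∀ d : ZMod 2, 1 + d ≠ 0 → d = 0 := by decide
        exact hz δ hne
      rw [hδ] at hδ0
      exact sub_eq_zero.mp hδ0
  · intro hBx k hk
    have hB' : ∀ i : Fin m, 0 < i.val → B i = xi i.val := fun i hi => hBx i hi
    rw [mainLemma m A B hA hB' k hk]
    exact one_ne_zero
end
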